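/- Let G be a connected graph, v an f-preferred vertex with terminal fort F_v, and suppose w ∈ F_v is also an f-preferred vertex (so v is p-preferred). Then {w} is a power dominating set of G. -/

import Mathlib

variable {V : Type*}

/-- Closed neighborhood of a set `A`: vertices in `A` or adjacent to a vertex of `A`
(the result of the domination step). -/
def closedNbhd (G : SimpleGraph V) (A : Set V) : Set V :=
  {w | ∃ v ∈ A, w = v ∨ G.Adj v w}

/-- One zero forcing step: an observed vertex `u` with exactly one unobserved neighbor `w`
forces `w`, enlarging the observed set `S` to `insert w S`. -/
def ForceStep (G : SimpleGraph V) (S T : Set V) : Prop :=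
  ∃ u w, u ∈ S ∧ w ∉ S ∧ G.Adj u w ∧ (∀ x, G.Adj u x → x ∉ S → x = w) ∧ T = insert w S

/-- `Observes G A O` : starting from the closed neighborhood of `A`, some sequence of
zero forcing steps yields observed set `O`. -/
def Observes (G : SimpleGraph V) (A O : Set V) : Prop :=
  Relation.ReflTransGen (ForceStep G) (closedNbhd G A) O

/-- No further zero forcing step applies from `O`. -/
def Stalled (G : SimpleGraph V) (O : Set V) : Prop := ∀ T, ¬ ForceStep G O T

/-- `A` is a power dominating set: the process observes every vertex. -/
def IsPDS (G : SimpleGraph V) (A : Set V) : Prop := Observes G A Set.univ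

/-- The power domination number: minimum size of a power dominating set. -/
noncomputable def pdn (G : SimpleGraph V) [Fintype V] : ℕ :=
  sInf {n | ∃ A : Finset V, IsPDS G (↑A : Set V) ∧ A.card = n}

/-- A fort: a nonempty set such that no outside vertex has exactly one neighbor in it. -/
def IsFort (G : SimpleGraph V) (F : Set V) : Prop :=
  F.Nonempty ∧ ∀ u ∉ F, ¬ ∃! w, w ∈ F ∧ G.Adj u w

/-- A terminal fort with cut vertex `v`: a fort whose only external neighbor is `v`. -/
def IsTerminalFort (G : SimpleGraph V) (v : V) (F : Set V) : Prop :=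
  IsFort G F ∧ v ∉ F ∧ ∀ u ∉ F, (∃ w ∈ F, G.Adj u w) → u = v

/-- `v` is f-preferred with terminal fort `F`: the process with input `{v}` observes all of `F`. -/
def FPreferred (G : SimpleGraph V) (v : V) (F : Set V) : Prop :=
  IsTerminalFort G v F ∧ ∃ O, Observes G {v} O ∧ F ⊆ O

/-- `v` is p-preferred: f-preferred with a terminal fort containing another f-preferred vertex. -/
def PPreferred (G : SimpleGraph V) (v : V) : Prop :=
  ∃ F, FPreferred G v F ∧ ∃ w ∈ F, w ≠ v ∧ ∃ F', FPreferred G w F'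

/-! First, `v ∈ F'`: otherwise `F' ⊆ F` would be a fort disjoint from `N[v]`, and the process
from `v` never enters such a fort, contradicting `F ⊆ O_v`. Walks from outside `F` to `v` can
avoid `F`, hence `w`, so they never leave `F'`; with `v ∈ F'` this makes the process from `{w}`
observe every vertex outside `F` and all of `N[v]`. What remains unobserved lies in `F ∖ N[v]`, a
finite set observed by the process from `v`; were the process from `{w}` to stall before observing
it, the unobserved vertices would form a fort disjoint from `N[v]`. -/

variable {G : SimpleGraph V}

lemma mem_closedNbhd_singleton {a x : V} : x ∈ closedNbhd G {a} ↔ x = a ∨ G.Adj a x := by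
  simp [closedNbhd]

lemma ForceStep.ssubset {S T : Set V} (h : ForceStep G S T) : S ⊂ T := by
  obtain ⟨_, w, _, hw, _, _, rfl⟩ := h
  exact Set.ssubset_insert hw

lemma subset_of_reflTransGen_forceStep {S T : Set V}
    (h : Relation.ReflTransGen (ForceStep G) S T) : S ⊆ T := by
  induction h with
  | refl => exact subset_rfl
  | tail _ hstep ih => exact ih.trans hstep.ssubset.subset

lemma finite_diff_of_reflTransGen_forceStep {S T : Set V}
    (h : Relation.ReflTransGen (ForceStep G) S T) : (T \ S).Finite := by
  induction h with
  | refl => simp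
  | tail _ hstep ih =>
    obtain ⟨_, w, _, _, _, _, rfl⟩ := hstep
    exact (ih.insert w).subset Set.insert_sdiff_subset

lemma IsFort.disjoint_of_reflTransGen_forceStep {U S T : Set V} (hU : IsFort G U)
    (hUS : Disjoint U S) (h : Relation.ReflTransGen (ForceStep G) S T) : Disjoint U T := by
  induction h with
  | refl => exact hUS
  | tail _ hstep ih =>
    obtain ⟨u, x, hu, -, hux, huniq, rfl⟩ := hstep
    refine Set.disjoint_insert_right.mpr ⟨fun hxU => hU.2 u (ih.notMem_of_mem_right hu) ?_, ih⟩
    exact ⟨x, ⟨hxU, hux⟩, fun y ⟨hyU, huy⟩ => huniq y huy (ih.notMem_of_mem_left hyU)⟩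

lemma Stalled.isFort_compl {S : Set V} (h : Stalled G S) (hS : Sᶜ.Nonempty) : IsFort G Sᶜ := by
  refine ⟨hS, fun u hu ⟨x, ⟨hx, hux⟩, huniq⟩ => h (insert x S) ?_⟩
  exact ⟨u, x, not_not.mp hu, hx, hux, fun y huy hy => huniq y ⟨hy, huy⟩, rfl⟩

lemma exists_reflTransGen_stalled_of_finite_compl {S : Set V} (hS : Sᶜ.Finite) :
    ∃ T, Relation.ReflTransGen (ForceStep G) S T ∧ Stalled G T := by
  induction hn : Sᶜ.ncard using Nat.strong_induction_on generalizing S with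
  | _ n ih =>
  by_cases hst : Stalled G S
  · exact ⟨S, .refl, hst⟩
  · obtain ⟨T, hT⟩ : ∃ T, ForceStep G S T := by simpa [Stalled] using hst
    have hcompl : Tᶜ ⊂ Sᶜ := compl_lt_compl_iff_lt.mpr hT.ssubset
    obtain ⟨U, hTU, hU⟩ :=
      ih _ (hn ▸ Set.ncard_lt_ncard hcompl hS) (hS.subset hcompl.subset) rfl
    exact ⟨U, .head hT hTU, hU⟩

lemma reflTransGen_forceStep_univ_of_compl_subset {A O S : Set V} (hA : Observes G A O)
    (hS : Sᶜ ⊆ O \ closedNbhd G A) : Relation.ReflTransGen (ForceStep G) S Set.univ := by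
  obtain ⟨T, hST, hT⟩ := exists_reflTransGen_stalled_of_finite_compl (G := G)
    ((finite_diff_of_reflTransGen_forceStep hA).subset hS)
  have hTO : Tᶜ ⊆ O \ closedNbhd G A :=
    (Set.compl_subset_compl.mpr (subset_of_reflTransGen_forceStep hST)).trans hS
  obtain hempty | ⟨x, hx⟩ := (Tᶜ).eq_empty_or_nonempty
  · rwa [Set.compl_empty_iff.mp hempty] at hST
  · have hdisj : Disjoint Tᶜ (closedNbhd G A) :=
      Set.disjoint_of_subset_left hTO Set.disjoint_sdiff_left
    have hTO' := (hT.isFort_compl ⟨x, hx⟩).disjoint_of_reflTransGen_forceStep hdisj hA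
    exact (hTO'.notMem_of_mem_left hx (hTO hx).1).elim

lemma IsTerminalFort.exists_walk_avoiding {v x : V} {F : Set V} (hF : IsTerminalFort G v F)
    (hx : x ∉ F) (p : G.Walk x v) : ∃ q : G.Walk x v, ∀ y ∈ q.support, y ∉ F := by
  induction p with
  | nil => exact ⟨.nil, by simpa using hx⟩
  | @cons a b c hab p ih =>
    by_cases hb : b ∈ F
    · obtain rfl : a = c := hF.2.2 a hx ⟨b, hb, hab⟩
      exact ⟨.nil, by simpa using hx⟩
    · obtain ⟨q, hq⟩ := ih hF hb
      refine ⟨.cons hab q, fun y hy => ?_⟩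
      rcases List.mem_cons.mp (SimpleGraph.Walk.support_cons hab q ▸ hy) with rfl | hy
      exacts [hx, hq y hy]

lemma IsTerminalFort.mem_of_walk {w x z : V} {F : Set V} (hF : IsTerminalFort G w F)
    (p : G.Walk x z) (hp : w ∉ p.support) (hx : x ∈ F) : z ∈ F := by
  induction p with
  | nil => exact hx
  | @cons a b _ hab p ih =>
    rw [SimpleGraph.Walk.support_cons, List.mem_cons, not_or] at hp
    refine ih hp.2 (by_contra fun hb => hp.2 ?_)
    exact hF.2.2 b hb ⟨a, hx, hab.symm⟩ ▸ p.start_mem_support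

lemma mem_terminalFort_iff_of_notMem {v w x : V} {F F' : Set V} (hc : G.Preconnected)
    (hF : IsTerminalFort G v F) (hF' : IsTerminalFort G w F') (hw : w ∈ F) (hx : x ∉ F) :
    x ∈ F' ↔ v ∈ F' := by
  obtain ⟨q, hq⟩ := hF.exists_walk_avoiding hx (hc x v).some
  have hwq : w ∉ q.support := fun h => hq w h hw
  refine ⟨hF'.mem_of_walk q hwq, hF'.mem_of_walk q.reverse ?_⟩
  rwa [SimpleGraph.Walk.support_reverse, List.mem_reverse]

lemma FPreferred.mem_terminalFort {v w : V} {F F' : Set V} (hc : G.Preconnected)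
    (hv : FPreferred G v F) (hw : w ∈ F) (hF' : IsTerminalFort G w F') : v ∈ F' := by
  by_contra hvF'
  have hF'F : F' ⊆ F := fun x hx =>
    by_contra fun hxF => hvF' ((mem_terminalFort_iff_of_notMem hc hv.1 hF' hw hxF).mp hx)
  have hdisj : Disjoint F' (closedNbhd G {v}) := Set.disjoint_left.mpr fun x hx hxv => by
    rcases mem_closedNbhd_singleton.mp hxv with rfl | hvx
    · exact hvF' hx
    · exact hv.1.2.1 (hF'.2.2 v hvF' ⟨x, hx, hvx⟩ ▸ hw)
  obtain ⟨O, hO, hFO⟩ := hv.2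
  obtain ⟨x, hx⟩ := hF'.1.1
  exact (hF'.1.disjoint_of_reflTransGen_forceStep hdisj hO).notMem_of_mem_left hx
    (hFO (hF'F hx))

lemma FPreferred.closedNbhd_union_compl_subset {v w : V} {F F' : Set V} (hc : G.Preconnected)
    (hv : FPreferred G v F) (hw : w ∈ F) (hF' : IsTerminalFort G w F') :
    closedNbhd G {v} ∪ Fᶜ ⊆ insert w F' := by
  have hvF' := hv.mem_terminalFort hc hw hF'
  rintro x (hx | hx)
  · rcases mem_closedNbhd_singleton.mp hx with rfl | hvx
    · exact Or.inr hvF'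
    · by_contra h
      rw [Set.mem_insert_iff, not_or] at h
      exact h.1 (hF'.2.2 x h.2 ⟨v, hvF', hvx.symm⟩)
  · exact Or.inr ((mem_terminalFort_iff_of_notMem hc hv.1 hF' hw hx).mpr hvF')

/-- If v is f-preferred with terminal fort F, and w ∈ F is also f-preferred, then {w} is a
power dominating set. -/
theorem stmt_15 {V : Type*} (G : SimpleGraph V) (hc : G.Connected) (v w : V) (F : Set V)
    (hv : FPreferred G v F) (hw : w ∈ F) (hwf : ∃ F', FPreferred G w F') :
    IsPDS G {w} := by
  obtain ⟨F', hF', O', hO', hF'O'⟩ := hwf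
  have hcover := hv.closedNbhd_union_compl_subset hc.preconnected hw hF'
  have hwO' : insert w F' ⊆ O' := Set.insert_subset
    (subset_of_reflTransGen_forceStep hO' (mem_closedNbhd_singleton.mpr (Or.inl rfl))) hF'O'
  obtain ⟨O, hO, hFO⟩ := hv.2
  refine Relation.ReflTransGen.trans hO' (reflTransGen_forceStep_univ_of_compl_subset hO ?_)
  intro x hx
  have hx' : x ∉ closedNbhd G {v} ∪ Fᶜ := fun h => hx (hwO' (hcover h))
  rw [Set.mem_union, not_or, Set.notMem_compl_iff] at hx'
  exact ⟨hFO hx'.2, hx'.1⟩
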